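/- arXiv:2111.10358 — 4 statements merged into one kernel-verified Lean document; each statement's English description precedes it below -/
import Mathlib

section
/- Let p : (0,∞) → ℝ be twice continuously differentiable, and let X : (0,∞) × ℝ → ℝ be twice continuously differentiable and satisfy, in the variables (x,y), the equation X_xx + (2y/x)·X_xy + ((y/x)² − p'(x))·X_yy = 0 at every point. Then there exists a continuously differentiable function Q̃ on D = {(η,w,v) ∈ ℝ³ : η > 0, v > 0} such that every C¹ map (η,w,v) : Ω → D on an open set Ω ⊆ ℝ² (space-time variables (x,t)) satisfying pointwise η_t − (w/v)_x = 0, w_t + (p(v/η))_x = 0 and v_t = 0 also satisfies ∂_t[η·X(v/η, w/η)] + ∂_x[Q̃(η,w,v)] = 0 at every point of Ω. -/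
/-!
The flux is `Q̃ = -(w/v)·X(v/η, w/η) + W(v/η, w/η)`, where `W` is a primitive of the 1-form
`(p'(x) - (y/x)²) X_y dx + (X_x + (2y/x) X_y) dy` on the half-plane `x > 0`. The equation satisfied
by `X` is exactly the closedness of this form, so `W` exists by the Poincaré lemma on a convex set.
With this choice `(Ẽ, Q̃)` is an entropy–flux pair for the conservation law
`u_t + F(u)_x = 0`, `F(η, w, v) = (-w/v, p(v/η), 0)`, i.e. `DQ̃ = DẼ ∘ DF`, and the chain rule
turns the system into `Ẽ_t + Q̃_x = DẼ (u_t + F(u)_x) = 0`.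
-/

open Set

theorem ContinuousLinearMap.apply_prodMk {F : Type*} [NormedAddCommGroup F] [NormedSpace ℝ F]
    (L : ℝ × ℝ →L[ℝ] F) (s t : ℝ) : L (s, t) = s • L (1, 0) + t • L (0, 1) := by
  rw [← map_smul, ← map_smul, ← map_add]; simp

theorem HasFDerivAt.div {𝕜 E : Type*} [NontriviallyNormedField 𝕜] [NormedAddCommGroup E]
    [NormedSpace 𝕜 E] {c d : E → 𝕜} {c' d' : E →L[𝕜] 𝕜} {x : E}
    (hc : HasFDerivAt c c' x) (hd : HasFDerivAt d d' x) (hx : d x ≠ 0) :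
    HasFDerivAt (fun y => c y / d y) ((d x)⁻¹ • c' - (c x / d x ^ 2) • d') x := by
  simp only [div_eq_mul_inv]
  refine (hc.fun_mul ((hasDerivAt_inv hx).comp_hasFDerivAt x hd)).congr_fderiv ?_
  ext z
  simp only [Function.comp_apply, add_apply, smul_apply, smul_eq_mul, sub_apply]
  ring

section Calculus

variable {E F : Type*} [NormedAddCommGroup E] [NormedSpace ℝ E] [NormedAddCommGroup F]
  [NormedSpace ℝ F]

theorem HasFDerivAt.hasDerivAt_partial_fst {f : ℝ × ℝ → F} {f' : ℝ × ℝ →L[ℝ] F} {x y : ℝ}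
    (hf : HasFDerivAt f f' (x, y)) : HasDerivAt (fun t => f (t, y)) (f' (1, 0)) x :=
  hf.comp_hasDerivAt x ((hasDerivAt_id x).prodMk (hasDerivAt_const x y))

theorem HasFDerivAt.hasDerivAt_partial_snd {f : ℝ × ℝ → F} {f' : ℝ × ℝ →L[ℝ] F} {x y : ℝ}
    (hf : HasFDerivAt f f' (x, y)) : HasDerivAt (fun s => f (x, s)) (f' (0, 1)) y :=
  hf.comp_hasDerivAt y ((hasDerivAt_const y x).prodMk (hasDerivAt_id y))

theorem fderiv_fderiv_apply_comm {f : E → F} {x : E} (hf : ContDiffAt ℝ 2 f x) (u v : E) :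
    fderiv ℝ (fun y => fderiv ℝ f y u) x v = fderiv ℝ (fun y => fderiv ℝ f y v) x u := by
  have hf' : DifferentiableAt ℝ (fderiv ℝ f) x :=
    (hf.fderiv_right (m := 1) le_rfl).differentiableAt one_ne_zero
  rw [fderiv_clm_apply hf' (differentiableAt_const u),
    fderiv_clm_apply hf' (differentiableAt_const v)]
  simpa using hf.isSymmSndFDerivAt (by simp) v u

theorem ContDiffOn.fderiv_apply_of_isOpen {f : E → F} {s : Set E} (hf : ContDiffOn ℝ 2 f s)
    (hs : IsOpen s) (u : E) : ContDiffOn ℝ 1 (fun x => fderiv ℝ f x u) s :=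
  (hf.fderiv_of_isOpen hs (m := 1) le_rfl).clm_apply contDiffOn_const

theorem contDiffOn_one_of_hasFDerivAt {f : E → F} {f' : E → E →L[ℝ] F} {s : Set E}
    (hs : IsOpen s) (hf : ∀ x ∈ s, HasFDerivAt f (f' x) x) (hf' : ContinuousOn f' s) :
    ContDiffOn ℝ 1 f s := by
  rw [show (1 : WithTop ℕ∞) = 0 + 1 from rfl, contDiffOn_succ_iff_fderiv_of_isOpen hs]
  refine ⟨fun x hx => (hf x hx).differentiableAt.differentiableWithinAt, by simp, ?_⟩
  exact contDiffOn_zero.2 (hf'.congr fun x hx => (hf x hx).fderiv)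

end Calculus

theorem Convex.exists_contDiffOn_hasFDerivAt_of_fderiv_snd_eq_fderiv_fst {s : Set (ℝ × ℝ)}
    (hs : Convex ℝ s) (hso : IsOpen s) {g h : ℝ × ℝ → ℝ} (hg : DifferentiableOn ℝ g s)
    (hh : DifferentiableOn ℝ h s)
    (hgh : ∀ q ∈ s, fderiv ℝ g q (0, 1) = fderiv ℝ h q (1, 0)) :
    ∃ W : ℝ × ℝ → ℝ, ContDiffOn ℝ 1 W s ∧ ∀ q ∈ s,
      HasFDerivAt W
        (g q • ContinuousLinearMap.fst ℝ ℝ ℝ + h q • ContinuousLinearMap.snd ℝ ℝ ℝ) q := by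
  set ω : ℝ × ℝ → ℝ × ℝ →L[ℝ] ℝ :=
    fun q => g q • ContinuousLinearMap.fst ℝ ℝ ℝ + h q • ContinuousLinearMap.snd ℝ ℝ ℝ
  have hω : ∀ q ∈ s, HasFDerivAt ω ((fderiv ℝ g q).smulRight (ContinuousLinearMap.fst ℝ ℝ ℝ) +
      (fderiv ℝ h q).smulRight (ContinuousLinearMap.snd ℝ ℝ ℝ)) q := fun q hq =>
    ((hg.differentiableAt (hso.mem_nhds hq)).hasFDerivAt.smul_const
        (ContinuousLinearMap.fst ℝ ℝ ℝ)).add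
      ((hh.differentiableAt (hso.mem_nhds hq)).hasFDerivAt.smul_const
        (ContinuousLinearMap.snd ℝ ℝ ℝ))
  have hclosed : ∀ q ∈ s, ∀ u v, fderiv ℝ ω q u v = fderiv ℝ ω q v u := by
    rintro q hq ⟨u₁, u₂⟩ ⟨v₁, v₂⟩
    simp only [(hω q hq).fderiv, add_apply, smul_apply, ContinuousLinearMap.smulRight_apply,
      ContinuousLinearMap.coe_fst', ContinuousLinearMap.coe_snd', smul_eq_mul,
      (fderiv ℝ g q).apply_prodMk u₁, (fderiv ℝ g q).apply_prodMk v₁,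
      (fderiv ℝ h q).apply_prodMk u₁, (fderiv ℝ h q).apply_prodMk v₁, hgh q hq]
    ring
  obtain ⟨W, hW⟩ := hs.exists_forall_hasFDerivAt_of_fderiv_symmetric hso
    (fun q hq => (hω q hq).differentiableAt.differentiableWithinAt) hclosed
  refine ⟨W, contDiffOn_one_of_hasFDerivAt hso hW ?_, hW⟩
  exact (hg.continuousOn.smul continuousOn_const).add (hh.continuousOn.smul continuousOn_const)

def IsEntropyFluxPairAt {V : Type*} [NormedAddCommGroup V] [NormedSpace ℝ V]
    (F : V → V) (E Q : V → ℝ) (u : V) : Prop :=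
  ∃ (E' : V →L[ℝ] ℝ) (F' : V →L[ℝ] V),
    HasFDerivAt E E' u ∧ HasFDerivAt F F' u ∧ HasFDerivAt Q (E'.comp F') u

theorem IsEntropyFluxPairAt.fderiv_comp_add_fderiv_comp_eq_zero {M V : Type*}
    [NormedAddCommGroup M] [NormedSpace ℝ M] [NormedAddCommGroup V] [NormedSpace ℝ V]
    {F : V → V} {E Q : V → ℝ} {U : M → V} {x : M} (hEQ : IsEntropyFluxPairAt F E Q (U x))
    (hU : DifferentiableAt ℝ U x) {t s : M}
    (hcons : fderiv ℝ U x t + fderiv ℝ (F ∘ U) x s = 0) :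
    fderiv ℝ (E ∘ U) x t + fderiv ℝ (Q ∘ U) x s = 0 := by
  obtain ⟨E', F', hE, hF, hQ⟩ := hEQ
  rw [(hF.comp x hU.hasFDerivAt).fderiv] at hcons
  rw [(hE.comp x hU.hasFDerivAt).fderiv, (hQ.comp x hU.hasFDerivAt).fderiv]
  simpa using congrArg E' hcons

noncomputable def fluxFormFst (p : ℝ → ℝ) (X : ℝ × ℝ → ℝ) (q : ℝ × ℝ) : ℝ :=
  (deriv p q.1 - (q.2 / q.1) ^ 2) * fderiv ℝ X q (0, 1)

noncomputable def fluxFormSnd (X : ℝ × ℝ → ℝ) (q : ℝ × ℝ) : ℝ :=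
  fderiv ℝ X q (1, 0) + 2 * (q.2 / q.1) * fderiv ℝ X q (0, 1)

section FluxForm

variable {p : ℝ → ℝ} {X : ℝ × ℝ → ℝ}

theorem isOpen_Ioi_prod_univ : IsOpen (Ioi (0 : ℝ) ×ˢ (univ : Set ℝ)) :=
  isOpen_Ioi.prod isOpen_univ

theorem contDiffOn_snd_div_fst {n : WithTop ℕ∞} :
    ContDiffOn ℝ n (fun q : ℝ × ℝ => q.2 / q.1) (Ioi 0 ×ˢ univ) :=
  contDiffOn_snd.div contDiffOn_fst fun _ hq => hq.1.ne'

theorem contDiffOn_fluxFormFst (hp : ContDiffOn ℝ 2 p (Ioi 0))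
    (hX : ContDiffOn ℝ 2 X (Ioi 0 ×ˢ univ)) :
    ContDiffOn ℝ 1 (fluxFormFst p X) (Ioi 0 ×ˢ univ) := by
  have hp' : ContDiffOn ℝ 1 (deriv p) (Ioi 0) := hp.deriv_of_isOpen isOpen_Ioi le_rfl
  exact ((hp'.comp contDiffOn_fst fun _ hq => hq.1).sub (contDiffOn_snd_div_fst.pow 2)).mul
    (hX.fderiv_apply_of_isOpen isOpen_Ioi_prod_univ _)

theorem contDiffOn_fluxFormSnd (hX : ContDiffOn ℝ 2 X (Ioi 0 ×ˢ univ)) :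
    ContDiffOn ℝ 1 (fluxFormSnd X) (Ioi 0 ×ˢ univ) :=
  (hX.fderiv_apply_of_isOpen isOpen_Ioi_prod_univ _).add
    ((contDiffOn_const.mul contDiffOn_snd_div_fst).mul
      (hX.fderiv_apply_of_isOpen isOpen_Ioi_prod_univ _))

theorem fderiv_fluxFormFst_snd_eq_fderiv_fluxFormSnd_fst (hp : ContDiffOn ℝ 2 p (Ioi 0))
    (hX : ContDiffOn ℝ 2 X (Ioi 0 ×ˢ univ))
    (hXpde : ∀ x y : ℝ, 0 < x →
      fderiv ℝ (fun q => fderiv ℝ X q (1, 0)) (x, y) (1, 0)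
        + (2 * y / x) * fderiv ℝ (fun q => fderiv ℝ X q (1, 0)) (x, y) (0, 1)
        + ((y / x) ^ 2 - deriv p x) *
            fderiv ℝ (fun q => fderiv ℝ X q (0, 1)) (x, y) (0, 1) = 0)
    {x y : ℝ} (hx : 0 < x) :
    fderiv ℝ (fluxFormFst p X) (x, y) (0, 1) = fderiv ℝ (fluxFormSnd X) (x, y) (1, 0) := by
  have hxy : Ioi 0 ×ˢ univ ∈ nhds (x, y) := isOpen_Ioi_prod_univ.mem_nhds ⟨hx, mem_univ y⟩
  have hdiff {f : ℝ × ℝ → ℝ} (hf : ContDiffOn ℝ 1 f (Ioi 0 ×ˢ univ)) :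
      HasFDerivAt f (fderiv ℝ f (x, y)) (x, y) :=
    ((hf.contDiffAt hxy).differentiableAt one_ne_zero).hasFDerivAt
  have hXx := hdiff (hX.fderiv_apply_of_isOpen isOpen_Ioi_prod_univ (1, 0))
  have hXy := hdiff (hX.fderiv_apply_of_isOpen isOpen_Ioi_prod_univ (0, 1))
  have hg : HasDerivAt (fun s => fluxFormFst p X (x, s))
      (-(2 * (y / x) * (1 / x)) * fderiv ℝ X (x, y) (0, 1) + (deriv p x - (y / x) ^ 2) *
        fderiv ℝ (fun q => fderiv ℝ X q (0, 1)) (x, y) (0, 1)) y := by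
    have hc : HasDerivAt (fun s => deriv p x - (s / x) ^ 2) (-(2 * (y / x) * (1 / x))) y := by
      simpa using (((hasDerivAt_id y).div_const x).pow 2).const_sub (deriv p x)
    exact hc.mul hXy.hasDerivAt_partial_snd
  have hh : HasDerivAt (fun t => fluxFormSnd X (t, y))
      (fderiv ℝ (fun q => fderiv ℝ X q (1, 0)) (x, y) (1, 0) +
        (2 * (-(y / x ^ 2)) * fderiv ℝ X (x, y) (0, 1) + 2 * (y / x) *
        fderiv ℝ (fun q => fderiv ℝ X q (0, 1)) (x, y) (1, 0))) x := by
    have hc : HasDerivAt (fun t => 2 * (y / t)) (2 * (-(y / x ^ 2))) x := by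
      simpa [div_eq_mul_inv] using ((hasDerivAt_inv hx.ne').const_mul y).const_mul 2
    exact hXx.hasDerivAt_partial_fst.add (hc.mul hXy.hasDerivAt_partial_fst)
  rw [(hdiff (contDiffOn_fluxFormFst hp hX)).hasDerivAt_partial_snd.unique hg,
    (hdiff (contDiffOn_fluxFormSnd hX)).hasDerivAt_partial_fst.unique hh,
    fderiv_fderiv_apply_comm (hX.contDiffAt hxy) (0, 1) (1, 0)]
  linear_combination (-1 : ℝ) * hXpde x y hx

theorem exists_contDiffOn_hasFDerivAt_fluxForm (hp : ContDiffOn ℝ 2 p (Ioi 0))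
    (hX : ContDiffOn ℝ 2 X (Ioi 0 ×ˢ univ))
    (hXpde : ∀ x y : ℝ, 0 < x →
      fderiv ℝ (fun q => fderiv ℝ X q (1, 0)) (x, y) (1, 0)
        + (2 * y / x) * fderiv ℝ (fun q => fderiv ℝ X q (1, 0)) (x, y) (0, 1)
        + ((y / x) ^ 2 - deriv p x) *
            fderiv ℝ (fun q => fderiv ℝ X q (0, 1)) (x, y) (0, 1) = 0) :
    ∃ W : ℝ × ℝ → ℝ, ContDiffOn ℝ 1 W (Ioi 0 ×ˢ univ) ∧ ∀ q ∈ Ioi 0 ×ˢ univ,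
      HasFDerivAt W (fluxFormFst p X q • ContinuousLinearMap.fst ℝ ℝ ℝ +
        fluxFormSnd X q • ContinuousLinearMap.snd ℝ ℝ ℝ) q :=
  ((convex_Ioi 0).prod convex_univ).exists_contDiffOn_hasFDerivAt_of_fderiv_snd_eq_fderiv_fst
    isOpen_Ioi_prod_univ ((contDiffOn_fluxFormFst hp hX).differentiableOn one_ne_zero)
    ((contDiffOn_fluxFormSnd hX).differentiableOn one_ne_zero)
    fun _ hq => fderiv_fluxFormFst_snd_eq_fderiv_fluxFormSnd_fst hp hX hXpde hq.1

end FluxForm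

noncomputable def particleCoords (u : ℝ × ℝ × ℝ) : ℝ × ℝ := (u.2.2 / u.1, u.2.1 / u.1)

noncomputable def particlePathFlux (p : ℝ → ℝ) (u : ℝ × ℝ × ℝ) : ℝ × ℝ × ℝ :=
  (-(u.2.1 / u.2.2), p (u.2.2 / u.1), 0)

noncomputable def extensionDensity (X : ℝ × ℝ → ℝ) (u : ℝ × ℝ × ℝ) : ℝ :=
  u.1 * X (particleCoords u)

noncomputable def extensionFlux (X W : ℝ × ℝ → ℝ) (u : ℝ × ℝ × ℝ) : ℝ :=
  -(u.2.1 / u.2.2) * X (particleCoords u) + W (particleCoords u)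

section ParticlePath

variable {p : ℝ → ℝ} {X W : ℝ × ℝ → ℝ}

theorem isEntropyFluxPairAt_particlePath {u : ℝ × ℝ × ℝ} (hη : u.1 ≠ 0) (hv : u.2.2 ≠ 0)
    (hp : DifferentiableAt ℝ p (u.2.2 / u.1)) (hX : DifferentiableAt ℝ X (particleCoords u))
    (hW : HasFDerivAt W (fluxFormFst p X (particleCoords u) • ContinuousLinearMap.fst ℝ ℝ ℝ +
      fluxFormSnd X (particleCoords u) • ContinuousLinearMap.snd ℝ ℝ ℝ) (particleCoords u)) :
    IsEntropyFluxPairAt (particlePathFlux p) (extensionDensity X) (extensionFlux X W) u := by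
  have hη' := hasFDerivAt_fst (𝕜 := ℝ) (p := u)
  have hw' := (hasFDerivAt_snd (𝕜 := ℝ) (p := u)).fst
  have hv' := (hasFDerivAt_snd (𝕜 := ℝ) (p := u)).snd
  have hx := hv'.div hη' hη
  have hΦ : HasFDerivAt particleCoords _ u := hx.prodMk (hw'.div hη' hη)
  have hXΦ := hX.hasFDerivAt.comp u hΦ
  have hwv := hw'.div hv' hv
  refine ⟨_, _, hη'.mul hXΦ, hwv.neg.prodMk ((hp.hasFDerivAt.comp u hx).prodMk
    (hasFDerivAt_const 0 u)), ((hwv.neg.mul hXΦ).add (hW.comp u hΦ)).congr_fderiv ?_⟩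
  refine ContinuousLinearMap.ext fun ⟨d₁, d₂, d₃⟩ => ?_
  simp only [particleCoords, fluxFormFst, fluxFormSnd, Function.comp_apply, Pi.neg_apply, neg_sub,
    ContinuousLinearMap.add_comp, ContinuousLinearMap.smul_comp, ContinuousLinearMap.fst_comp_prod,
    ContinuousLinearMap.snd_comp_prod, add_apply, smul_apply, sub_apply, zero_apply,
    ContinuousLinearMap.comp_apply, ContinuousLinearMap.prod_apply, ContinuousLinearMap.coe_fst',
    ContinuousLinearMap.coe_snd', ContinuousLinearMap.comp_sub, ContinuousLinearMap.comp_smulₛₗ,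
    map_inv₀, Real.ringHom_apply, map_div₀, fderiv_eq_smul_deriv, smul_eq_mul, mul_zero, zero_sub]
  set L := fderiv ℝ X (u.2.2 / u.1, u.2.1 / u.1)
  rw [L.apply_prodMk (_ - _), L.apply_prodMk (-_)]
  simp only [smul_eq_mul]
  field_simp
  ring

theorem contDiffOn_extensionFlux {n : WithTop ℕ∞} (hX : ContDiffOn ℝ n X (Ioi 0 ×ˢ univ))
    (hW : ContDiffOn ℝ n W (Ioi 0 ×ˢ univ)) :
    ContDiffOn ℝ n (extensionFlux X W) {u | 0 < u.1 ∧ 0 < u.2.2} := by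
  have hΦ : ContDiffOn ℝ n particleCoords {u : ℝ × ℝ × ℝ | 0 < u.1 ∧ 0 < u.2.2} :=
    (contDiffOn_snd.snd.div contDiffOn_fst fun _ hu => hu.1.ne').prodMk
      (contDiffOn_snd.fst.div contDiffOn_fst fun _ hu => hu.1.ne')
  have hmaps : MapsTo particleCoords {u | 0 < u.1 ∧ 0 < u.2.2} (Ioi 0 ×ˢ univ) :=
    fun _ hu => ⟨div_pos hu.2 hu.1, mem_univ _⟩
  exact ((contDiffOn_snd.fst.div contDiffOn_snd.snd fun _ hu => hu.2.ne').neg.mul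
    (hX.comp hΦ hmaps)).add (hW.comp hΦ hmaps)

theorem fderiv_add_fderiv_particlePathFlux_eq_zero {M : Type*} [NormedAddCommGroup M]
    [NormedSpace ℝ M] {η w v : M → ℝ} {x t s : M} (hη : DifferentiableAt ℝ η x)
    (hw : DifferentiableAt ℝ w x) (hv : DifferentiableAt ℝ v x) (hη0 : η x ≠ 0) (hv0 : v x ≠ 0)
    (hp : DifferentiableAt ℝ p (v x / η x))
    (h₁ : fderiv ℝ η x t - fderiv ℝ (fun r => w r / v r) x s = 0)
    (h₂ : fderiv ℝ w x t + fderiv ℝ (fun r => p (v r / η r)) x s = 0)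
    (h₃ : fderiv ℝ v x t = 0) :
    fderiv ℝ (fun r => (η r, w r, v r)) x t +
      fderiv ℝ (particlePathFlux p ∘ fun r => (η r, w r, v r)) x s = 0 := by
  have hU := hη.hasFDerivAt.prodMk (hw.hasFDerivAt.prodMk hv.hasFDerivAt)
  have hwv := (hw.hasFDerivAt.div hv.hasFDerivAt hv0).differentiableAt
  have hpv := hp.comp x (hv.hasFDerivAt.div hη.hasFDerivAt hη0).differentiableAt
  have hF : HasFDerivAt (particlePathFlux p ∘ fun r => (η r, w r, v r)) _ x :=
    hwv.hasFDerivAt.neg.prodMk (hpv.hasFDerivAt.prodMk (hasFDerivAt_const 0 x))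
  rw [hU.fderiv, hF.fderiv]
  simp only [ContinuousLinearMap.prod_apply, neg_apply, zero_apply, Prod.mk_add_mk, add_zero,
    Prod.ext_iff, Prod.fst_zero, Prod.snd_zero]
  exact ⟨by linear_combination h₁, h₂, h₃⟩

end ParticlePath

/-- If `X` solves `X_xx + (2y/x)·X_xy + ((y/x)² − p'(x))·X_yy = 0` on
`(0,∞) × ℝ`, then there is a `C¹` flux `Q̃` on `{η > 0, v > 0}` such that every `C¹`
solution `(η,w,v)` of the particle-path system `η_t − (w/v)_x = 0`, `w_t + (p(v/η))_x = 0`,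
`v_t = 0` on an open `Ω ⊆ ℝ²` satisfies `∂_t[η·X(v/η, w/η)] + ∂_x[Q̃(η,w,v)] = 0`. -/
theorem exists_flux_for_particle_path_extension (p : ℝ → ℝ)
    (hp : ContDiffOn ℝ 2 p (Set.Ioi 0))
    (X : ℝ × ℝ → ℝ)
    (hX : ContDiffOn ℝ 2 X (Set.Ioi 0 ×ˢ (Set.univ : Set ℝ)))
    (hXpde : ∀ x y : ℝ, 0 < x →
      fderiv ℝ (fun q => fderiv ℝ X q (1, 0)) (x, y) (1, 0)
        + (2 * y / x) * fderiv ℝ (fun q => fderiv ℝ X q (1, 0)) (x, y) (0, 1)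
        + ((y / x) ^ 2 - deriv p x) *
            fderiv ℝ (fun q => fderiv ℝ X q (0, 1)) (x, y) (0, 1) = 0) :
    ∃ Qt : ℝ × ℝ × ℝ → ℝ,
      ContDiffOn ℝ 1 Qt {q : ℝ × ℝ × ℝ | 0 < q.1 ∧ 0 < q.2.2} ∧
      ∀ (Ω : Set (ℝ × ℝ)), IsOpen Ω →
        ∀ η w v : ℝ × ℝ → ℝ,
          ContDiffOn ℝ 1 η Ω → ContDiffOn ℝ 1 w Ω → ContDiffOn ℝ 1 v Ω →
          (∀ q ∈ Ω, 0 < η q ∧ 0 < v q) →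
          (∀ q ∈ Ω, fderiv ℝ η q (0, 1) - fderiv ℝ (fun r => w r / v r) q (1, 0) = 0) →
          (∀ q ∈ Ω, fderiv ℝ w q (0, 1) + fderiv ℝ (fun r => p (v r / η r)) q (1, 0) = 0) →
          (∀ q ∈ Ω, fderiv ℝ v q (0, 1) = 0) →
          ∀ q ∈ Ω,
            fderiv ℝ (fun r => η r * X (v r / η r, w r / η r)) q (0, 1)
              + fderiv ℝ (fun r => Qt (η r, w r, v r)) q (1, 0) = 0 := by
  obtain ⟨W, hWc, hW⟩ := exists_contDiffOn_hasFDerivAt_fluxForm hp hX hXpde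
  refine ⟨extensionFlux X W, contDiffOn_extensionFlux (hX.of_le one_le_two) hWc, ?_⟩
  intro Ω hΩ η w v hη hw hv hpos h₁ h₂ h₃ q hq
  obtain ⟨hη0, hv0⟩ := hpos q hq
  have hdiff {f : ℝ × ℝ → ℝ} (hf : ContDiffOn ℝ 1 f Ω) : DifferentiableAt ℝ f q :=
    ((hf q hq).contDiffAt (hΩ.mem_nhds hq)).differentiableAt one_ne_zero
  have hx : v q / η q ∈ Ioi 0 := div_pos hv0 hη0
  have hxy : particleCoords (η q, w q, v q) ∈ Ioi 0 ×ˢ univ := ⟨hx, mem_univ _⟩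
  have hpq : DifferentiableAt ℝ p (v q / η q) :=
    (hp.contDiffAt (isOpen_Ioi.mem_nhds hx)).differentiableAt two_ne_zero
  have hXq : DifferentiableAt ℝ X (particleCoords (η q, w q, v q)) :=
    (hX.contDiffAt (isOpen_Ioi_prod_univ.mem_nhds hxy)).differentiableAt two_ne_zero
  have hcons := fderiv_add_fderiv_particlePathFlux_eq_zero (hdiff hη) (hdiff hw) (hdiff hv)
    hη0.ne' hv0.ne' hpq (h₁ q hq) (h₂ q hq) (h₃ q hq)
  exact (isEntropyFluxPairAt_particlePath hη0.ne' hv0.ne' hpq hXq (hW _ hxy)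
    ).fderiv_comp_add_fderiv_comp_eq_zero (U := fun r => (η r, w r, v r))
      ((hdiff hη).prodMk ((hdiff hw).prodMk (hdiff hv))) hcons
end

section
/- Let p : (0,∞) → ℝ be continuous; let ρ₀, u₀ : ℝ → ℝ be bounded measurable with ρ₀ ≥ c₀ > 0; let η, w, v : ℝ × [0,∞) → ℝ be bounded measurable with c₁ ≤ η ≤ c₂ and c₁ ≤ v ≤ c₂ (0 < c₁ ≤ c₂) and form a weak solution of η_t − (w/v)_x = 0, w_t + (p(v/η))_x = 0, v_t = 0 with initial data (1, ρ₀u₀, ρ₀); and let γ : ℝ × [0,∞) → ℝ be locally Lipschitz with γ(x,0) = x, ∂γ/∂x = η and ∂γ/∂t = w/v almost everywhere, so that each γ(·,t) is a bi-Lipschitz homeomorphism of ℝ. Set ρ(x,t) := (v/η)(γ⁻¹(x,t),t) and u(x,t) := (w/v)(γ⁻¹(x,t),t). Let X, Q : (0,∞) × ℝ → ℝ be continuous. If for every nonnegative compactly supported Lipschitz function φ̃ on ℝ × (0,∞) one has ∬ [ ∂_tφ̃·η·X(v/η, w/η) + ∂_xφ̃·( Q(v/η, w/η) − (w/v)·X(v/η,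 w/η) ) ] dx dt ≥ 0, then for every nonnegative φ ∈ C_c^∞(ℝ × (0,∞)) one has ∬ [ φ_t·X(ρ, ρu) + φ_x·Q(ρ, ρu) ] dx dt ≥ 0. -/
open MeasureTheory

/-- A test function in `C_c^∞(ℝ × [0,∞))` (smooth, compactly supported on space-time). -/
def IsTestFun (φ : ℝ × ℝ → ℝ) : Prop :=
  ContDiff ℝ (⊤ : ℕ∞) φ ∧ HasCompactSupport φ

/-- The weak form `∬_{t>0} (φ_t·a + φ_x·b) dx dt + ∫ φ(x,0)·f(x) dx`. -/
noncomputable def weakForm (a b : ℝ × ℝ → ℝ) (f : ℝ → ℝ) (φ : ℝ × ℝ → ℝ) : ℝ :=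
  (∫ q in {q : ℝ × ℝ | 0 < q.2},
      (fderiv ℝ φ q (0, 1) * a q + fderiv ℝ φ q (1, 0) * b q))
    + ∫ x : ℝ, φ (x, 0) * f x

/-- The inverse particle path: `(x,t) ↦ (γ(·,t)⁻¹(x), t)`. -/
noncomputable def pathInv (γ : ℝ × ℝ → ℝ) (q : ℝ × ℝ) : ℝ × ℝ :=
  (Function.invFun (fun x => γ (x, q.2)) q.1, q.2)

/-!
Pull an Eulerian test function `φ` back along the particle-path map `Γ(x,t) = (γ(x,t), t)`
(`pathMap γ`).
By the chain rule `φ ∘ Γ` has partial derivatives `∂ₜ(φ ∘ Γ) = (φₜ + (w/v) φₓ) ∘ Γ` and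
`∂ₓ(φ ∘ Γ) = η · φₓ ∘ Γ`, so it is an admissible Lagrangian test function; it is compactly
supported because `η ≥ c₁` forces every slice `γ(·,t)` to stretch distances by at least `c₁`.
The map `Γ` is locally Lipschitz, injective for `t > 0`, and its Jacobian determinant is
`∂ₓγ = η`, so the change-of-variables formula turns the Lagrangian entropy integral for `φ ∘ Γ`
into `η` times the Eulerian one for `φ`, pointwise after the substitution `ρ = v/η`, `ρu = w/η`.
-/

open Set Function Metric

lemma LocallyLipschitz.ae_differentiableAt {E F : Type*} [NormedAddCommGroup E]
    [NormedSpace ℝ E] [FiniteDimensional ℝ E] [MeasurableSpace E] [BorelSpace E]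
    [NormedAddCommGroup F] [NormedSpace ℝ F] [FiniteDimensional ℝ F]
    (μ : Measure E) [μ.IsAddHaarMeasure] {f : E → F} (hf : LocallyLipschitz f) :
    ∀ᵐ x ∂μ, DifferentiableAt ℝ f x := by
  have hball (n : ℕ) : ∀ᵐ x ∂μ, x ∈ ball (0 : E) n → DifferentiableAt ℝ f x := by
    obtain ⟨K, hK⟩ := hf.locallyLipschitzOn.exists_lipschitzOnWith_of_compact
      (isCompact_closedBall (0 : E) n)
    filter_upwards [(hK.mono ball_subset_closedBall).ae_differentiableWithinAt_of_mem (μ := μ)]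
      with x hx hxn
    exact (hx hxn).differentiableAt (isOpen_ball.mem_nhds hxn)
  filter_upwards [ae_all_iff.2 hball] with x hx
  obtain ⟨n, hn⟩ := exists_nat_gt (dist x 0)
  exact hx n (mem_ball.2 hn)

lemma LocallyLipschitz.volume_image_null {f : ℝ × ℝ → ℝ × ℝ} (hf : LocallyLipschitz f)
    {s : Set (ℝ × ℝ)} (hs : volume s = 0) : volume (f '' s) = 0 := by
  have hcover : f '' s ⊆ ⋃ n : ℕ, f '' (s ∩ closedBall 0 n) := by
    rintro - ⟨q, hq, rfl⟩
    obtain ⟨n, hn⟩ := exists_nat_ge (dist q 0)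
    exact mem_iUnion.2 ⟨n, q, ⟨hq, mem_closedBall.2 hn⟩, rfl⟩
  refine measure_mono_null hcover (measure_iUnion_null fun n => ?_)
  obtain ⟨K, hK⟩ := hf.locallyLipschitzOn.exists_lipschitzOnWith_of_compact
    (isCompact_closedBall (0 : ℝ × ℝ) n)
  have h := (hK.mono (inter_subset_right (s := s))).hausdorffMeasure_image_le zero_le_two
  rw [hausdorffMeasure_prod_real, measure_mono_null inter_subset_left hs, mul_zero] at h
  exact nonpos_iff_eq_zero.1 h

lemma LocallyLipschitz.exists_lipschitzWith_of_hasCompactSupport {α E : Type*} [MetricSpace α]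
    [ProperSpace α] [NormedAddCommGroup E] {f : α → E} (hf : LocallyLipschitz f)
    (hcs : HasCompactSupport f) : ∃ K, LipschitzWith K f := by
  set L := cthickening 1 (tsupport f)
  obtain ⟨K, hK⟩ := hf.locallyLipschitzOn.exists_lipschitzOnWith_of_compact
    (hcs.cthickening (r := 1))
  obtain ⟨M, hM⟩ := hf.continuous.bounded_above_of_compact_support hcs
  set K' : NNReal := max K M.toNNReal
  have hMK' : M ≤ K' := (Real.le_coe_toNNReal M).trans (le_max_right (K : ℝ) _)
  have far (x y : α) (hy : y ∉ L) : dist (f x) (f y) ≤ K' * dist x y := by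
    have hfy : f y = 0 :=
      image_eq_zero_of_notMem_tsupport fun h => hy (self_subset_cthickening _ h)
    by_cases hx : x ∈ tsupport f
    · have hxy : 1 ≤ dist x y := by
        by_contra! h
        exact hy (mem_cthickening_of_dist_le y x 1 _ hx (by rw [dist_comm]; exact h.le))
      calc dist (f x) (f y) = ‖f x‖ := by rw [hfy, dist_zero_right]
        _ ≤ K' := (hM x).trans hMK'
        _ ≤ K' * dist x y := le_mul_of_one_le_right K'.2 hxy
    · rw [image_eq_zero_of_notMem_tsupport hx, hfy, dist_self]
      positivity
  refine ⟨K', LipschitzWith.of_dist_le_mul fun x y => ?_⟩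
  by_cases hy : y ∈ L
  · by_cases hx : x ∈ L
    · exact (hK.dist_le_mul x hx y hy).trans (by gcongr; exact le_max_left _ _)
    · rw [dist_comm, dist_comm x]
      exact far y x hx
  · exact far x y hy

lemma ContinuousLinearMap.det_eq_of_apply_eq (L : ℝ × ℝ →L[ℝ] ℝ × ℝ) {a : ℝ}
    (h₁ : L (1, 0) = (a, 0)) (h₂ : (L (0, 1)).2 = 1) : L.det = a := by
  show (L : ℝ × ℝ →ₗ[ℝ] ℝ × ℝ).det = a
  rw [← LinearMap.det_toMatrix (Module.Basis.finTwoProd ℝ), Matrix.det_fin_two]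
  simp [LinearMap.toMatrix_apply, h₁, h₂]

lemma ContinuousLinearMap.apply_eq_fst_smul_add_snd_smul {E : Type*} [NormedAddCommGroup E]
    [NormedSpace ℝ E] (L : ℝ × ℝ →L[ℝ] E) (p : ℝ × ℝ) :
    L p = p.1 • L (1, 0) + p.2 • L (0, 1) := by
  rw [← map_smul, ← map_smul, ← map_add]
  congr 1
  ext <;> simp

lemma mul_abs_sub_le_abs_sub_of_le_abs_deriv {g g' : ℝ → ℝ} {c : ℝ}
    (hg : Continuous g) (hinj : Injective g) (hd : ∀ᵐ x, HasDerivAt g (g' x) x)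
    (hc : ∀ x, c ≤ |g' x|) (a b : ℝ) : c * |b - a| ≤ |g b - g a| := by
  wlog hab : a ≤ b generalizing a b
  · simpa only [abs_sub_comm] using this b a (le_of_not_ge hab)
  obtain ⟨N, hN_ae, hN_meas, hN⟩ := hd.exists_measurable_mem
  set s := Icc a b ∩ N
  have hs : MeasurableSet s := measurableSet_Icc.inter hN_meas
  have himage : g '' s ⊆ uIcc (g a) (g b) := by
    rintro - ⟨x, ⟨⟨hxa, hxb⟩, -⟩, rfl⟩
    rcases hg.strictMono_of_inj hinj with hm | hm
    · exact mem_uIcc.2 (Or.inl ⟨hm.monotone hxa, hm.monotone hxb⟩)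
    · exact mem_uIcc.2 (Or.inr ⟨hm.antitone hxb, hm.antitone hxa⟩)
  -- `∫ₛ |g'|` is the measure of `g '' s`, which lies between `g a` and `g b`.
  have key : ENNReal.ofReal (c * (b - a)) ≤ ENNReal.ofReal |g b - g a| :=
    calc ENNReal.ofReal (c * (b - a)) = ∫⁻ _ in s, ENNReal.ofReal c := by
          rw [setLIntegral_const, measure_inter_conull (mem_ae_iff.1 hN_ae), Real.volume_Icc,
            ENNReal.ofReal_mul' (sub_nonneg.2 hab)]
      _ ≤ ∫⁻ x in s, ENNReal.ofReal |g' x| * 1 :=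
          lintegral_mono fun x => by simpa using ENNReal.ofReal_le_ofReal (hc x)
      _ = volume (g '' s) := by
          rw [← lintegral_image_eq_lintegral_abs_deriv_mul hs
            (fun x hx => (hN x hx.2).hasDerivWithinAt) hinj.injOn (fun _ => 1)]
          simp
      _ ≤ volume (uIcc (g a) (g b)) := measure_mono himage
      _ = ENNReal.ofReal |g b - g a| := Real.volume_interval
  rw [abs_of_nonneg (sub_nonneg.2 hab)]
  exact (ENNReal.ofReal_le_ofReal_iff (abs_nonneg _)).1 key

def pathMap (γ : ℝ × ℝ → ℝ) (q : ℝ × ℝ) : ℝ × ℝ := (γ q, q.2)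

section ParticlePath

variable {γ η : ℝ × ℝ → ℝ}

lemma continuous_pathMap (hγ : Continuous γ) : Continuous (pathMap γ) :=
  hγ.prodMk continuous_snd

lemma LocallyLipschitz.pathMap (hγ : LocallyLipschitz γ) : LocallyLipschitz (pathMap γ) :=
  hγ.prodMk LipschitzWith.prod_snd.locallyLipschitz

lemma pathInv_pathMap {q : ℝ × ℝ} (hinj : Injective fun x => γ (x, q.2)) :
    pathInv γ (pathMap γ q) = q :=
  Prod.ext (leftInverse_invFun hinj q.1) rfl

lemma bijOn_pathMap (hbij : ∀ t, 0 < t → Bijective fun x => γ (x, t)) :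
    BijOn (pathMap γ) {q | 0 < q.2} {q | 0 < q.2} := by
  refine ⟨fun q hq => hq, ?_, ?_⟩
  · rintro ⟨x, t⟩ ht ⟨x', t'⟩ - h
    obtain ⟨hx, rfl : t = t'⟩ := Prod.ext_iff.1 h
    rw [(hbij t ht).injective hx]
  · rintro ⟨y, t⟩ ht
    obtain ⟨x, hx⟩ := (hbij t ht).surjective y
    exact ⟨(x, t), ht, Prod.ext hx rfl⟩

lemma mul_abs_sub_le_abs_sub_slice (hγ : Continuous γ)
    (hinj : ∀ t, 0 < t → Injective fun x => γ (x, t))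
    (hγx : ∀ᵐ q : ℝ × ℝ, 0 < q.2 → HasDerivAt (fun x => γ (x, q.2)) (η q) q.1)
    {c : ℝ} (hη : ∀ q : ℝ × ℝ, 0 < q.2 → c ≤ η q) {t : ℝ} (ht : 0 < t) (a b : ℝ) :
    c * |b - a| ≤ |γ (b, t) - γ (a, t)| := by
  have hswap : ∀ᵐ q : ℝ × ℝ, 0 < q.1 → HasDerivAt (fun x => γ (x, q.1)) (η q.swap) q.2 :=
    (Measure.measurePreserving_swap (μ := volume) (ν := volume)).quasiMeasurePreserving.ae hγx
  -- Fubini only gives the estimate for almost every time; it passes to all `t > 0` because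
  -- it is a closed condition in `t`.
  have hslices : ∀ᵐ s : ℝ, 0 < s → c * |b - a| ≤ |γ (b, s) - γ (a, s)| := by
    filter_upwards [Measure.ae_ae_of_ae_prod hswap] with s hs hs_pos
    exact mul_abs_sub_le_abs_sub_of_le_abs_deriv (by fun_prop) (hinj s hs_pos)
      (hs.mono fun x hx => hx hs_pos) (fun x => (hη (x, s) hs_pos).trans (le_abs_self _)) a b
  have hclosed : IsClosed {s : ℝ | c * |b - a| ≤ |γ (b, s) - γ (a, s)|} :=
    isClosed_le continuous_const (by fun_prop)
  have hdense := (Measure.dense_of_ae hslices).open_subset_closure_inter isOpen_Ioi ht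
  refine hclosed.closure_subset_iff.2 ?_ hdense
  rintro s ⟨hs_pos, hs⟩
  exact hs hs_pos

lemma isCompact_preimage_pathMap (hγ : Continuous γ) {c : ℝ} (hc : 0 < c)
    (hgrowth : ∀ t, 0 < t → ∀ a b : ℝ, c * |b - a| ≤ |γ (b, t) - γ (a, t)|)
    {K : Set (ℝ × ℝ)} (hK : IsCompact K) (hKpos : K ⊆ {q | 0 < q.2}) :
    IsCompact (pathMap γ ⁻¹' K) := by
  rcases K.eq_empty_or_nonempty with rfl | hne
  · simp
  obtain ⟨qmin, hqmin_mem, hqmin⟩ := hK.exists_isMinOn hne continuous_snd.continuousOn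
  obtain ⟨R, hR⟩ := hK.isBounded.subset_closedBall 0
  obtain ⟨C, hC⟩ := (isCompact_Icc (a := qmin.2) (b := R)).exists_bound_of_continuousOn
    (f := fun t => γ (0, t)) (by fun_prop)
  refine (isCompact_Icc.prod isCompact_Icc).of_isClosed_subset
    (hK.isClosed.preimage (continuous_pathMap hγ))
    (s := Icc (-((R + C) / c)) ((R + C) / c) ×ˢ Icc qmin.2 R) fun q hq => ?_
  have hqK : pathMap γ q ∈ K := hq
  have hqR : ‖pathMap γ q‖ ≤ R := mem_closedBall_zero_iff.1 (hR hqK)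
  have hτ : qmin.2 ≤ q.2 := isMinOn_iff.1 hqmin (pathMap γ q) hqK
  have hT : q.2 ≤ R := (le_abs_self _).trans ((norm_snd_le (pathMap γ q)).trans hqR)
  have hγq : |γ q| ≤ R := (norm_fst_le (pathMap γ q)).trans hqR
  have hγ0 : |γ (0, q.2)| ≤ C := hC q.2 ⟨hτ, hT⟩
  refine ⟨abs_le.1 ((le_div_iff₀' hc).2 ?_), hτ, hT⟩
  calc c * |q.1| = c * |q.1 - 0| := by rw [sub_zero]
    _ ≤ |γ q - γ (0, q.2)| := hgrowth q.2 ((hKpos hqmin_mem).trans_le hτ) 0 q.1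
    _ ≤ |γ q| + |γ (0, q.2)| := abs_sub _ _
    _ ≤ R + C := add_le_add hγq hγ0

-- The time derivative of `γ` only enters the off-diagonal entry of the Jacobian.
lemma HasFDerivAt.det_pathMap {q : ℝ × ℝ} {L : ℝ × ℝ →L[ℝ] ℝ × ℝ} {a : ℝ}
    (hL : HasFDerivAt (pathMap γ) L q) (hx : HasDerivAt (fun x => γ (x, q.2)) a q.1) :
    L.det = a := by
  refine L.det_eq_of_apply_eq ?_ ?_
  · exact (hL.comp_hasDerivAt q.1 ((hasDerivAt_id q.1).prodMk (hasDerivAt_const _ _))).unique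
      (hx.prodMk (hasDerivAt_const _ _))
  · have ht := hL.comp_hasDerivAt q.2 ((hasDerivAt_const q.2 q.1).prodMk (hasDerivAt_id q.2))
    have hsnd : HasDerivAt (fun s => (pathMap γ (q.1, s)).2) (L (0, 1)).2 q.2 :=
      (ContinuousLinearMap.snd ℝ ℝ ℝ).hasFDerivAt.comp_hasDerivAt q.2 ht
    exact hsnd.unique (hasDerivAt_id' q.2)

theorem setIntegral_eq_setIntegral_abs_mul_pathMap (hγ : LocallyLipschitz γ)
    (hbij : ∀ t, 0 < t → Bijective fun x => γ (x, t))
    (hγx : ∀ᵐ q : ℝ × ℝ, 0 < q.2 → HasDerivAt (fun x => γ (x, q.2)) (η q) q.1)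
    (G : ℝ × ℝ → ℝ) :
    ∫ q in {q : ℝ × ℝ | 0 < q.2}, G q =
      ∫ q in {q : ℝ × ℝ | 0 < q.2}, |η q| * G (pathMap γ q) := by
  set H : Set (ℝ × ℝ) := {q | 0 < q.2}
  have hH : MeasurableSet H := measurableSet_lt measurable_const measurable_snd
  obtain ⟨s, hs_ae, hs_meas, hs⟩ :=
    ((hγ.pathMap.ae_differentiableAt volume).and hγx).exists_measurable_mem
  have hs_null : volume sᶜ = 0 := mem_ae_iff.1 hs_ae
  have hHs : (H ∩ s : Set (ℝ × ℝ)) =ᵐ[volume] H :=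
    inter_ae_eq_left_of_ae_eq_univ (ae_eq_univ.2 hs_null)
  -- `pathMap γ` maps `H` onto itself, and the part of `H` outside `s` has a null image.
  have himage : (pathMap γ '' (H ∩ s) : Set (ℝ × ℝ)) =ᵐ[volume] H := by
    refine ((bijOn_pathMap hbij).mapsTo.mono_left inter_subset_left).image_subset.eventuallyLE
      |>.antisymm (ae_le_set.2 (measure_mono_null ?_ (hγ.pathMap.volume_image_null hs_null)))
    rintro y ⟨hyH, hy⟩
    obtain ⟨q, hqH, rfl⟩ := (bijOn_pathMap hbij).surjOn hyH
    exact ⟨q, fun hq => hy ⟨q, ⟨hqH, hq⟩, rfl⟩, rfl⟩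
  have hderiv (q) (hq : q ∈ H ∩ s) :
      HasFDerivWithinAt (pathMap γ) (fderiv ℝ (pathMap γ) q) (H ∩ s) q :=
    (hs q hq.2).1.hasFDerivAt.hasFDerivWithinAt
  calc ∫ q in H, G q = ∫ q in pathMap γ '' (H ∩ s), G q := setIntegral_congr_set himage.symm
    _ = ∫ q in H ∩ s, |(fderiv ℝ (pathMap γ) q).det| • G (pathMap γ q) :=
      integral_image_eq_integral_abs_det_fderiv_smul volume (hH.inter hs_meas) hderiv
        ((bijOn_pathMap hbij).injOn.mono inter_subset_left) G
    _ = ∫ q in H ∩ s, |η q| * G (pathMap γ q) :=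
      setIntegral_congr_fun (hH.inter hs_meas) fun q hq => by
        rw [smul_eq_mul, (hs q hq.2).1.hasFDerivAt.det_pathMap ((hs q hq.2).2 hq.1)]
    _ = ∫ q in H, |η q| * G (pathMap γ q) := setIntegral_congr_set hHs

lemma ae_hasDerivAt_comp_pathMap {u : ℝ × ℝ → ℝ} {φ : ℝ × ℝ → ℝ} (hφ : Differentiable ℝ φ)
    (hsupp : tsupport φ ⊆ {q | 0 < q.2})
    (hγd : ∀ᵐ q : ℝ × ℝ, 0 < q.2 →
      HasDerivAt (fun x => γ (x, q.2)) (η q) q.1 ∧ HasDerivAt (fun s => γ (q.1, s)) (u q) q.2) :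
    ∀ᵐ q : ℝ × ℝ,
      HasDerivAt (fun s => (φ ∘ pathMap γ) (q.1, s)) (fderiv ℝ φ (pathMap γ q) (u q, 1)) q.2 ∧
      HasDerivAt (fun x => (φ ∘ pathMap γ) (x, q.2)) (fderiv ℝ φ (pathMap γ q) (η q, 0)) q.1 := by
  have hne : ∀ᵐ q : ℝ × ℝ, q.2 ≠ 0 := by
    have h : volume ((univ : Set ℝ) ×ˢ ({0} : Set ℝ)) = 0 := by
      rw [Measure.volume_eq_prod, Measure.prod_prod]
      simp
    filter_upwards [measure_eq_zero_iff_ae_notMem.1 h] with q hq h0 using hq ⟨trivial, h0⟩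
  filter_upwards [hγd, hne] with q hq hq0
  rcases hq0.lt_or_gt with hneg | hpos
  -- Nothing is known about `γ` for `t < 0`, but `φ ∘ pathMap γ` vanishes there.
  · have hout (p : ℝ × ℝ) (hp : p.2 < 0) : pathMap γ p ∉ tsupport φ :=
      fun h => (hsupp h).not_gt hp
    have hvan : φ ∘ pathMap γ =ᶠ[nhds q] fun _ => 0 := by
      filter_upwards [(isOpen_lt continuous_snd continuous_const).mem_nhds hneg] with p hp
      exact image_eq_zero_of_notMem_tsupport (f := φ) (hout p hp)
    have hD : HasFDerivAt (φ ∘ pathMap γ) (0 : ℝ × ℝ →L[ℝ] ℝ) q :=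
      (hasFDerivAt_const 0 q).congr_of_eventuallyEq hvan
    rw [fderiv_of_notMem_tsupport ℝ (hout q hneg)]
    have ht : HasDerivAt ((φ ∘ pathMap γ) ∘ fun s => (q.1, s)) 0 q.2 := by
      simpa using hD.comp_hasDerivAt q.2 ((hasDerivAt_const q.2 q.1).prodMk (hasDerivAt_id q.2))
    have hx : HasDerivAt ((φ ∘ pathMap γ) ∘ fun x => (x, q.2)) 0 q.1 := by
      simpa using hD.comp_hasDerivAt q.1 ((hasDerivAt_id q.1).prodMk (hasDerivAt_const q.1 q.2))
    simpa using ⟨ht, hx⟩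
  · obtain ⟨hx, ht⟩ := hq hpos
    exact ⟨(hφ _).hasFDerivAt.comp_hasDerivAt q.2 (ht.prodMk (hasDerivAt_id q.2)),
      (hφ _).hasFDerivAt.comp_hasDerivAt q.1 (hx.prodMk (hasDerivAt_const q.1 q.2))⟩

end ParticlePath

lemma abs_mul_eulerian_integrand_eq_lagrangian (D : ℝ × ℝ →L[ℝ] ℝ) (X Q : ℝ × ℝ → ℝ)
    {η w v : ℝ} (hη : 0 < η) (hv : v ≠ 0) :
    |η| * (D (0, 1) * X (v / η, v / η * (w / v)) + D (1, 0) * Q (v / η, v / η * (w / v))) =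
      D (w / v, 1) * (η * X (v / η, w / η))
        + D (η, 0) * (Q (v / η, w / η) - w / v * X (v / η, w / η)) := by
  have harg : v / η * (w / v) = w / η := by field_simp
  rw [abs_of_pos hη, harg, D.apply_eq_fst_smul_add_snd_smul (w / v, 1),
    D.apply_eq_fst_smul_add_snd_smul (η, 0)]
  simp only [smul_eq_mul]
  ring

theorem isentropic_admissibility_transfer_general
    (η w v : ℝ × ℝ → ℝ)
    (c₁ c₂ : ℝ) (hc₁ : 0 < c₁)
    (hηbd : ∀ q : ℝ × ℝ, 0 ≤ q.2 → c₁ ≤ η q ∧ η q ≤ c₂)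
    (hvbd : ∀ q : ℝ × ℝ, 0 ≤ q.2 → c₁ ≤ v q ∧ v q ≤ c₂)
    (γ : ℝ × ℝ → ℝ) (hγ : LocallyLipschitz γ)
    (hγd : ∀ᵐ q : ℝ × ℝ ∂volume, 0 < q.2 →
      HasDerivAt (fun x => γ (x, q.2)) (η q) q.1 ∧
      HasDerivAt (fun s => γ (q.1, s)) (w q / v q) q.2)
    (hbij : ∀ t : ℝ, 0 ≤ t →
      Function.Bijective (fun x => γ (x, t)) ∧
      ∃ K₁ K₂ : NNReal, LipschitzWith K₁ (fun x => γ (x, t)) ∧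
        LipschitzWith K₂ (Function.invFun (fun x => γ (x, t))))
    (X Q : ℝ × ℝ → ℝ)
    (hadm : ∀ φL : ℝ × ℝ → ℝ, (∃ K : NNReal, LipschitzWith K φL) →
      HasCompactSupport φL → tsupport φL ⊆ {q : ℝ × ℝ | 0 < q.2} →
      (∀ q : ℝ × ℝ, 0 ≤ φL q) →
      ∀ φLt φLx : ℝ × ℝ → ℝ,
        (∀ᵐ q : ℝ × ℝ ∂volume,
          HasDerivAt (fun s => φL (q.1, s)) (φLt q) q.2 ∧
          HasDerivAt (fun y => φL (y, q.2)) (φLx q) q.1) →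
        0 ≤ ∫ q in {q : ℝ × ℝ | 0 < q.2},
          (φLt q * (η q * X (v q / η q, w q / η q))
            + φLx q * (Q (v q / η q, w q / η q)
                - (w q / v q) * X (v q / η q, w q / η q)))) :
    ∀ φ : ℝ × ℝ → ℝ, IsTestFun φ → tsupport φ ⊆ {q : ℝ × ℝ | 0 < q.2} →
      (∀ q : ℝ × ℝ, 0 ≤ φ q) →
      0 ≤ ∫ q in {q : ℝ × ℝ | 0 < q.2},
        (fderiv ℝ φ q (0, 1) *
            X (v (pathInv γ q) / η (pathInv γ q),
               v (pathInv γ q) / η (pathInv γ q) * (w (pathInv γ q) / v (pathInv γ q)))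
          + fderiv ℝ φ q (1, 0) *
            Q (v (pathInv γ q) / η (pathInv γ q),
               v (pathInv γ q) / η (pathInv γ q) * (w (pathInv γ q) / v (pathInv γ q)))) := by
  intro φ hφ hsupp hφnn
  have hinj (t : ℝ) (ht : 0 < t) : Injective fun x => γ (x, t) := (hbij t ht.le).1.injective
  have hγx : ∀ᵐ q : ℝ × ℝ, 0 < q.2 → HasDerivAt (fun x => γ (x, q.2)) (η q) q.1 :=
    hγd.mono fun q hq hpos => (hq hpos).1
  have hgrowth (t : ℝ) (ht : 0 < t) (a b : ℝ) : c₁ * |b - a| ≤ |γ (b, t) - γ (a, t)| :=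
    mul_abs_sub_le_abs_sub_slice hγ.continuous hinj hγx (fun q hq => (hηbd q hq.le).1) ht a b
  have hsuppL : tsupport (φ ∘ pathMap γ) ⊆ pathMap γ ⁻¹' tsupport φ :=
    tsupport_comp_subset_preimage φ (continuous_pathMap hγ.continuous)
  have hcsL : HasCompactSupport (φ ∘ pathMap γ) :=
    (isCompact_preimage_pathMap hγ.continuous hc₁ hgrowth hφ.2 hsupp).of_isClosed_subset
      (isClosed_tsupport _) hsuppL
  have hlipL : ∃ K, LipschitzWith K (φ ∘ pathMap γ) :=
    LocallyLipschitz.exists_lipschitzWith_of_hasCompactSupport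
      ((hφ.1.of_le (by simp)).locallyLipschitz.comp hγ.pathMap) hcsL
  have hlag := hadm (φ ∘ pathMap γ) hlipL hcsL
    (hsuppL.trans fun q hq => show 0 < (pathMap γ q).2 from hsupp hq) (fun q => hφnn _) _ _
    (ae_hasDerivAt_comp_pathMap (hφ.1.differentiable (by simp)) hsupp hγd)
  rw [setIntegral_eq_setIntegral_abs_mul_pathMap hγ (fun t ht => (hbij t ht.le).1) hγx]
  refine hlag.trans_eq (setIntegral_congr_fun (measurableSet_lt measurable_const measurable_snd)
    fun q (hq : 0 < q.2) => ?_)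
  rw [pathInv_pathMap (hinj q.2 hq)]
  exact (abs_mul_eulerian_integrand_eq_lagrangian _ X Q (hc₁.trans_le (hηbd q hq.le).1)
    (hc₁.trans_le (hvbd q hq.le).1).ne').symm

/-- **admissibility correspondence in Theorem 2.** If `(η,w,v)` is a weak
solution of the particle-path system of isentropic gas dynamics with data `(1, ρ₀u₀, ρ₀)`,
`γ` the associated weak particle path (each `γ(·,t)` bi-Lipschitz), `ρ = (v/η)∘γ⁻¹`,
`u = (w/v)∘γ⁻¹`, and `(X,Q)` is continuous on `(0,∞) × ℝ`: if the Lagrangian admissibility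
inequality `∬ ∂_tφ̃·η·X(v/η,w/η) + ∂_xφ̃·(Q(v/η,w/η) − (w/v)·X(v/η,w/η)) ≥ 0` holds for
every nonnegative compactly supported Lipschitz `φ̃` on `ℝ × (0,∞)`, then the Eulerian
admissibility inequality `∬ φ_t·X(ρ,ρu) + φ_x·Q(ρ,ρu) ≥ 0` holds for every nonnegative
`φ ∈ C_c^∞(ℝ × (0,∞))`. -/
theorem isentropic_admissibility_transfer
    (p : ℝ → ℝ) (hp : ContinuousOn p (Set.Ioi 0))
    (ρ₀ u₀ : ℝ → ℝ) (hρ₀m : Measurable ρ₀) (hu₀m : Measurable u₀)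
    (M₀ : ℝ) (hbd₀ : ∀ x : ℝ, |ρ₀ x| ≤ M₀ ∧ |u₀ x| ≤ M₀)
    (c₀ : ℝ) (hc₀ : 0 < c₀) (hρ₀c : ∀ x : ℝ, c₀ ≤ ρ₀ x)
    (η w v : ℝ × ℝ → ℝ)
    (hηm : Measurable η) (hwm : Measurable w) (hvm : Measurable v)
    (Mw : ℝ) (hwbd : ∀ q : ℝ × ℝ, 0 ≤ q.2 → |w q| ≤ Mw)
    (c₁ c₂ : ℝ) (hc₁ : 0 < c₁) (hc₁₂ : c₁ ≤ c₂)
    (hηbd : ∀ q : ℝ × ℝ, 0 ≤ q.2 → c₁ ≤ η q ∧ η q ≤ c₂)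
    (hvbd : ∀ q : ℝ × ℝ, 0 ≤ q.2 → c₁ ≤ v q ∧ v q ≤ c₂)
    (hweak1 : ∀ φ : ℝ × ℝ → ℝ, IsTestFun φ →
      weakForm η (fun q => -(w q / v q)) (fun _ => 1) φ = 0)
    (hweak2 : ∀ φ : ℝ × ℝ → ℝ, IsTestFun φ →
      weakForm w (fun q => p (v q / η q)) (fun x => ρ₀ x * u₀ x) φ = 0)
    (hweak3 : ∀ φ : ℝ × ℝ → ℝ, IsTestFun φ →
      weakForm v (fun _ => 0) ρ₀ φ = 0)
    (γ : ℝ × ℝ → ℝ) (hγ : LocallyLipschitz γ) (hγ0 : ∀ x : ℝ, γ (x, 0) = x)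
    (hγd : ∀ᵐ q : ℝ × ℝ ∂volume, 0 < q.2 →
      HasDerivAt (fun x => γ (x, q.2)) (η q) q.1 ∧
      HasDerivAt (fun s => γ (q.1, s)) (w q / v q) q.2)
    (hbij : ∀ t : ℝ, 0 ≤ t →
      Function.Bijective (fun x => γ (x, t)) ∧
      ∃ K₁ K₂ : NNReal, LipschitzWith K₁ (fun x => γ (x, t)) ∧
        LipschitzWith K₂ (Function.invFun (fun x => γ (x, t))))
    (X Q : ℝ × ℝ → ℝ)
    (hX : ContinuousOn X (Set.Ioi 0 ×ˢ (Set.univ : Set ℝ)))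
    (hQ : ContinuousOn Q (Set.Ioi 0 ×ˢ (Set.univ : Set ℝ)))
    (hadm : ∀ φL : ℝ × ℝ → ℝ, (∃ K : NNReal, LipschitzWith K φL) →
      HasCompactSupport φL → tsupport φL ⊆ {q : ℝ × ℝ | 0 < q.2} →
      (∀ q : ℝ × ℝ, 0 ≤ φL q) →
      ∀ φLt φLx : ℝ × ℝ → ℝ,
        (∀ᵐ q : ℝ × ℝ ∂volume,
          HasDerivAt (fun s => φL (q.1, s)) (φLt q) q.2 ∧
          HasDerivAt (fun y => φL (y, q.2)) (φLx q) q.1) →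
        0 ≤ ∫ q in {q : ℝ × ℝ | 0 < q.2},
          (φLt q * (η q * X (v q / η q, w q / η q))
            + φLx q * (Q (v q / η q, w q / η q)
                - (w q / v q) * X (v q / η q, w q / η q)))) :
    ∀ φ : ℝ × ℝ → ℝ, IsTestFun φ → tsupport φ ⊆ {q : ℝ × ℝ | 0 < q.2} →
      (∀ q : ℝ × ℝ, 0 ≤ φ q) →
      0 ≤ ∫ q in {q : ℝ × ℝ | 0 < q.2},
        (fderiv ℝ φ q (0, 1) *
            X (v (pathInv γ q) / η (pathInv γ q),
               v (pathInv γ q) / η (pathInv γ q) * (w (pathInv γ q) / v (pathInv γ q)))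
          + fderiv ℝ φ q (1, 0) *
            Q (v (pathInv γ q) / η (pathInv γ q),
               v (pathInv γ q) / η (pathInv γ q) * (w (pathInv γ q) / v (pathInv γ q)))) :=
  isentropic_admissibility_transfer_general η w v c₁ c₂ hc₁ hηbd hvbd γ hγ hγd hbij X Q hadm
end

section
/- Let α > 1, let Ω ⊆ ℝ × (0,∞) be open, and let ρ, u, p : Ω → ℝ be continuously differentiable with ρ > 0 and p > 0, satisfying pointwise the compressible gas dynamics equations ρ_t + (ρu)_x = 0, (ρu)_t + (ρu² + p)_x = 0, and (ρE)_t + (ρuE + pu)_x = 0, where E = p/((α−1)ρ) + u²/2. Then for every continuously differentiable X : (0,∞) → ℝ, the identity ∂_t[ρ·X(p·ρ^{−α})] + ∂_x[u·ρ·X(p·ρ^{−α})] = 0 holds at every point of Ω. -/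
/-!
Write `D = ∂_t + u ∂_x` for the material derivative. For `C¹` solutions the three conservation
laws are equivalent to the convective equations `Dρ = -ρ u_x`, `ρ Du = -p_x` and
`Dp = -α p u_x`; the last one comes out of the energy equation once the energy density is written
as `ρE = p/(α-1) + ρu²/2`. Hence `s = p ρ^{-α}` is transported,
`Ds = ρ^{-α} Dp - α p ρ^{-α-1} Dρ = 0`, and so
`∂_t(ρ X(s)) + ∂_x(u ρ X(s)) = X(s) (Dρ + ρ u_x) + ρ X'(s) Ds = 0`.
-/

open Filter Topology

section MaterialDeriv

variable {E : Type*} [NormedAddCommGroup E] [NormedSpace ℝ E] (v w : E) {u f g : E → ℝ} {q : E}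

/-- The material derivative `∂_v f + u ∂_w f`; `v` is the time and `w` the space direction. -/
noncomputable def materialDeriv (u f : E → ℝ) (q : E) : ℝ :=
  fderiv ℝ f q v + u q * fderiv ℝ f q w

theorem materialDeriv_add (hf : DifferentiableAt ℝ f q) (hg : DifferentiableAt ℝ g q) :
    materialDeriv v w u (fun r => f r + g r) q =
      materialDeriv v w u f q + materialDeriv v w u g q := by
  simp only [materialDeriv, fderiv_fun_add hf hg, add_apply]
  ring

theorem materialDeriv_mul (hf : DifferentiableAt ℝ f q) (hg : DifferentiableAt ℝ g q) :
    materialDeriv v w u (fun r => f r * g r) q =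
      f q * materialDeriv v w u g q + g q * materialDeriv v w u f q := by
  simp only [materialDeriv, fderiv_fun_mul hf hg, add_apply,
    smul_apply, smul_eq_mul]
  ring

theorem materialDeriv_const_mul (hf : DifferentiableAt ℝ f q) (c : ℝ) :
    materialDeriv v w u (fun r => c * f r) q = c * materialDeriv v w u f q := by
  simp only [materialDeriv, fderiv_const_mul hf, smul_apply, smul_eq_mul]
  ring

theorem materialDeriv_comp {X : ℝ → ℝ} {X' : ℝ} (hX : HasDerivAt X X' (f q))
    (hf : DifferentiableAt ℝ f q) :
    materialDeriv v w u (fun r => X (f r)) q = X' * materialDeriv v w u f q := by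
  have hXf : HasFDerivAt (fun r => X (f r)) (X' • fderiv ℝ f q) q :=
    hX.comp_hasFDerivAt q hf.hasFDerivAt
  simp only [materialDeriv, hXf.fderiv, smul_apply, smul_eq_mul]
  ring

theorem fderiv_add_fderiv_mul_eq_materialDeriv_add (hu : DifferentiableAt ℝ u q)
    (hf : DifferentiableAt ℝ f q) :
    fderiv ℝ f q v + fderiv ℝ (fun r => u r * f r) q w =
      materialDeriv v w u f q + f q * fderiv ℝ u q w := by
  simp only [materialDeriv, fderiv_fun_mul hu hf, add_apply,
    smul_apply, smul_eq_mul]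
  ring

end MaterialDeriv

section GasDynamics

variable {E : Type*} [NormedAddCommGroup E] [NormedSpace ℝ E] (v w : E) {ρ u p : E → ℝ} {q : E}

theorem materialDeriv_density (hρ : DifferentiableAt ℝ ρ q) (hu : DifferentiableAt ℝ u q)
    (hmass : fderiv ℝ ρ q v + fderiv ℝ (fun r => ρ r * u r) q w = 0) :
    materialDeriv v w u ρ q = -(ρ q * fderiv ℝ u q w) := by
  simp only [mul_comm (ρ _) (u _)] at hmass
  rw [fderiv_add_fderiv_mul_eq_materialDeriv_add v w hu hρ] at hmass
  linarith

theorem density_mul_materialDeriv_velocity (hρ : DifferentiableAt ℝ ρ q)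
    (hu : DifferentiableAt ℝ u q) (hp : DifferentiableAt ℝ p q)
    (hmass : materialDeriv v w u ρ q = -(ρ q * fderiv ℝ u q w))
    (hmomentum : fderiv ℝ (fun r => ρ r * u r) q v
      + fderiv ℝ (fun r => ρ r * u r ^ 2 + p r) q w = 0) :
    ρ q * materialDeriv v w u u q = -fderiv ℝ p q w := by
  have hflux : (fun r => ρ r * u r ^ 2 + p r) = fun r => u r * (ρ r * u r) + p r := by
    funext r
    ring
  rw [hflux, fderiv_fun_add (by fun_prop) hp, add_apply, ← add_assoc,
    fderiv_add_fderiv_mul_eq_materialDeriv_add v w hu (hρ.fun_mul hu),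
    materialDeriv_mul v w hρ hu, hmass] at hmomentum
  linarith

theorem materialDeriv_pressure {α : ℝ} (hα : α ≠ 1) (hρ : DifferentiableAt ℝ ρ q)
    (hu : DifferentiableAt ℝ u q) (hp : DifferentiableAt ℝ p q) (hρq : ρ q ≠ 0)
    (hmass : materialDeriv v w u ρ q = -(ρ q * fderiv ℝ u q w))
    (hvelocity : ρ q * materialDeriv v w u u q = -fderiv ℝ p q w)
    (henergy : fderiv ℝ (fun r => ρ r * (p r / ((α - 1) * ρ r) + u r ^ 2 / 2)) q v
      + fderiv ℝ (fun r =>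
          ρ r * u r * (p r / ((α - 1) * ρ r) + u r ^ 2 / 2) + p r * u r) q w = 0) :
    materialDeriv v w u p q = -(α * p q * fderiv ℝ u q w) := by
  set P : E → ℝ := fun r => (α - 1)⁻¹ * p r + 2⁻¹ * (ρ r * u r ^ 2) with hP
  have hρne : ∀ᶠ r in 𝓝 q, ρ r ≠ 0 := hρ.continuousAt.eventually_ne hρq
  have hdensity : (fun r => ρ r * (p r / ((α - 1) * ρ r) + u r ^ 2 / 2)) =ᶠ[𝓝 q] P := by
    filter_upwards [hρne] with r hr
    simp only [hP]
    field_simp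
  have hflux : (fun r => ρ r * u r * (p r / ((α - 1) * ρ r) + u r ^ 2 / 2) + p r * u r)
      =ᶠ[𝓝 q] fun r => u r * P r + p r * u r := by
    filter_upwards [hρne] with r hr
    simp only [hP]
    field_simp
  have hu2 : materialDeriv v w u (fun r => u r ^ 2) q = 2 * u q * materialDeriv v w u u q := by
    rw [materialDeriv_comp v w (hasDerivAt_pow 2 (u q)) hu]
    ring
  have hPd : DifferentiableAt ℝ P q := by fun_prop
  rw [hdensity.fderiv_eq, hflux.fderiv_eq, fderiv_fun_add (hu.fun_mul hPd) (hp.fun_mul hu),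
    add_apply, ← add_assoc,
    fderiv_add_fderiv_mul_eq_materialDeriv_add v w hu hPd, hP,
    materialDeriv_add v w (by fun_prop) (by fun_prop), materialDeriv_const_mul v w hp,
    materialDeriv_const_mul v w (by fun_prop), materialDeriv_mul v w hρ (by fun_prop), hu2,
    fderiv_fun_mul hp hu, hmass] at henergy
  simp only [add_apply, smul_apply,
    smul_eq_mul] at henergy
  have hα1 : α - 1 ≠ 0 := sub_ne_zero.2 hα
  field_simp at henergy
  linear_combination henergy / 2 - u q * (α - 1) * hvelocity

theorem materialDeriv_entropy {α : ℝ} (hρ : DifferentiableAt ℝ ρ q) (hp : DifferentiableAt ℝ p q)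
    (hρq : 0 < ρ q) (hmass : materialDeriv v w u ρ q = -(ρ q * fderiv ℝ u q w))
    (hpressure : materialDeriv v w u p q = -(α * p q * fderiv ℝ u q w)) :
    materialDeriv v w u (fun r => p r * ρ r ^ (-α)) q = 0 := by
  rw [materialDeriv_mul v w hp (hρ.rpow_const (Or.inl hρq.ne')),
    materialDeriv_comp v w (Real.hasDerivAt_rpow_const (Or.inl hρq.ne')) hρ, hmass, hpressure,
    Real.rpow_sub_one hρq.ne']
  field_simp
  ring

theorem fderiv_add_fderiv_mul_density_mul_comp_eq_zero {s : E → ℝ} {X : ℝ → ℝ}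
    (hρ : DifferentiableAt ℝ ρ q) (hu : DifferentiableAt ℝ u q) (hs : DifferentiableAt ℝ s q)
    (hX : DifferentiableAt ℝ X (s q))
    (hmass : materialDeriv v w u ρ q = -(ρ q * fderiv ℝ u q w))
    (htransport : materialDeriv v w u s q = 0) :
    fderiv ℝ (fun r => ρ r * X (s r)) q v
      + fderiv ℝ (fun r => u r * (ρ r * X (s r))) q w = 0 := by
  have hXs : DifferentiableAt ℝ (fun r => X (s r)) q := hX.comp q hs
  rw [fderiv_add_fderiv_mul_eq_materialDeriv_add v w hu (hρ.fun_mul hXs),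
    materialDeriv_mul v w hρ hXs, materialDeriv_comp v w hX.hasDerivAt hs,
    htransport, hmass]
  ring

end GasDynamics

theorem full_gas_dynamics_extra_conservation_laws_general
    (α : ℝ) (hα : 1 < α)
    (Ω : Set (ℝ × ℝ)) (hΩ : IsOpen Ω)
    (ρ u p : ℝ × ℝ → ℝ)
    (hρ : ContDiffOn ℝ 1 ρ Ω) (hu : ContDiffOn ℝ 1 u Ω) (hp : ContDiffOn ℝ 1 p Ω)
    (hρpos : ∀ q ∈ Ω, 0 < ρ q) (hppos : ∀ q ∈ Ω, 0 < p q)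
    (heq1 : ∀ q ∈ Ω,
      fderiv ℝ ρ q (0, 1) + fderiv ℝ (fun r => ρ r * u r) q (1, 0) = 0)
    (heq2 : ∀ q ∈ Ω,
      fderiv ℝ (fun r => ρ r * u r) q (0, 1)
        + fderiv ℝ (fun r => ρ r * u r ^ 2 + p r) q (1, 0) = 0)
    (heq3 : ∀ q ∈ Ω,
      fderiv ℝ (fun r => ρ r * (p r / ((α - 1) * ρ r) + u r ^ 2 / 2)) q (0, 1)
        + fderiv ℝ (fun r =>
            ρ r * u r * (p r / ((α - 1) * ρ r) + u r ^ 2 / 2) + p r * u r) q (1, 0) = 0) :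
    ∀ X : ℝ → ℝ, ContDiffOn ℝ 1 X (Set.Ioi 0) →
      ∀ q ∈ Ω,
        fderiv ℝ (fun r => ρ r * X (p r * ρ r ^ (-α))) q (0, 1)
          + fderiv ℝ (fun r => u r * (ρ r * X (p r * ρ r ^ (-α)))) q (1, 0) = 0 := by
  intro X hX q hq
  have hdiff {f : ℝ × ℝ → ℝ} (hf : ContDiffOn ℝ 1 f Ω) : DifferentiableAt ℝ f q :=
    (hf.contDiffAt (hΩ.mem_nhds hq)).differentiableAt one_ne_zero
  have hρq := hρpos q hq
  have hmass := materialDeriv_density _ _ (hdiff hρ) (hdiff hu) (heq1 q hq)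
  have hvelocity := density_mul_materialDeriv_velocity _ _ (hdiff hρ) (hdiff hu) (hdiff hp)
    hmass (heq2 q hq)
  have hpressure := materialDeriv_pressure _ _ hα.ne' (hdiff hρ) (hdiff hu) (hdiff hp)
    hρq.ne' hmass hvelocity (heq3 q hq)
  have hentropy := materialDeriv_entropy _ _ (hdiff hρ) (hdiff hp) hρq hmass hpressure
  have hs : 0 < p q * ρ q ^ (-α) := mul_pos (hppos q hq) (Real.rpow_pos_of_pos hρq _)
  exact fderiv_add_fderiv_mul_density_mul_comp_eq_zero _ _ (hdiff hρ) (hdiff hu)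
    ((hdiff hp).fun_mul ((hdiff hρ).rpow_const (Or.inl hρq.ne')))
    ((hX.contDiffAt (Ioi_mem_nhds hs)).differentiableAt one_ne_zero) hmass hentropy

/-- **verification direction of Proposition 3.** `C¹` positive solutions
`(ρ,u,p)` of the full compressible gas dynamics equations (mass, momentum and energy, with
`E = p/((α−1)ρ) + u²/2`, `α > 1`) on an open `Ω ⊆ ℝ × (0,∞)` satisfy the additional
conservation law `∂_t[ρ·X(p·ρ^{−α})] + ∂_x[u·ρ·X(p·ρ^{−α})] = 0` for every continuously
differentiable `X : (0,∞) → ℝ`. -/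
theorem full_gas_dynamics_extra_conservation_laws
    (α : ℝ) (hα : 1 < α)
    (Ω : Set (ℝ × ℝ)) (hΩ : IsOpen Ω) (hΩt : ∀ q ∈ Ω, 0 < q.2)
    (ρ u p : ℝ × ℝ → ℝ)
    (hρ : ContDiffOn ℝ 1 ρ Ω) (hu : ContDiffOn ℝ 1 u Ω) (hp : ContDiffOn ℝ 1 p Ω)
    (hρpos : ∀ q ∈ Ω, 0 < ρ q) (hppos : ∀ q ∈ Ω, 0 < p q)
    (heq1 : ∀ q ∈ Ω,
      fderiv ℝ ρ q (0, 1) + fderiv ℝ (fun r => ρ r * u r) q (1, 0) = 0)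
    (heq2 : ∀ q ∈ Ω,
      fderiv ℝ (fun r => ρ r * u r) q (0, 1)
        + fderiv ℝ (fun r => ρ r * u r ^ 2 + p r) q (1, 0) = 0)
    (heq3 : ∀ q ∈ Ω,
      fderiv ℝ (fun r => ρ r * (p r / ((α - 1) * ρ r) + u r ^ 2 / 2)) q (0, 1)
        + fderiv ℝ (fun r =>
            ρ r * u r * (p r / ((α - 1) * ρ r) + u r ^ 2 / 2) + p r * u r) q (1, 0) = 0) :
    ∀ X : ℝ → ℝ, ContDiffOn ℝ 1 X (Set.Ioi 0) →
      ∀ q ∈ Ω,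
        fderiv ℝ (fun r => ρ r * X (p r * ρ r ^ (-α))) q (0, 1)
          + fderiv ℝ (fun r => u r * (ρ r * X (p r * ρ r ^ (-α)))) q (1, 0) = 0 :=
  full_gas_dynamics_extra_conservation_laws_general α hα Ω hΩ ρ u p hρ hu hp hρpos hppos heq1 heq2
    heq3
end

section
/- Let U ⊆ ℝ² be open and let z, w : U → ℝ be continuously differentiable functions of the variables (T,E) with Δ := z_T·w_E − z_E·w_T ≠ 0 on U. Let Ω ⊆ ℝ² be open (space-time variables (x,t)) and let T, E : Ω → ℝ be continuously differentiable with (T(x,t), E(x,t)) ∈ U for all (x,t) ∈ Ω, and suppose the composite functions z̃(x,t) := z(T(x,t), E(x,t)) and w̃(x,t) := w(T(x,t), E(x,t)) satisfy pointwise z̃_t + (T − E)·z̃_x = 0 and w̃_t + (T + E)·w̃_x = 0. Then at every point of Ω (with the partial derivatives of z and w evaluated at (T(x,t), E(x,t))): T_t + T·T_x = (E/Δ)·[ (z_T·w_E + z_E·w_T)·T_x + 2·z_E·w_E·E_x ] and E_t + T·E_x = −(E/Δ)·[ 2·z_T·w_T·T_x + (z_E·w_T + z_T·w_E)·E_x ].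 -/
/-!
By the chain rule `z̃_t + λ z̃_x = z_T (T_t + λ T_x) + z_E (E_t + λ E_x)`, so with `λ = T − E`
and `λ = T + E` the diagonal system becomes a linear system for the material derivatives
`T_t + T T_x` and `E_t + T E_x`, with the Jacobian `[[z_T, z_E], [w_T, w_E]]` as coefficient
matrix and right-hand sides `E (z_T T_x + z_E E_x)` and `−E (w_T T_x + w_E E_x)`. Since `Δ ≠ 0`,
Cramer's rule gives the stated formulas.
-/

theorem ContinuousLinearMap.apply_prod_eq_mul_add_mul (L : ℝ × ℝ →L[ℝ] ℝ) (x y : ℝ) :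
    L (x, y) = x * L (1, 0) + y * L (0, 1) := by
  have hxy : ((x, y) : ℝ × ℝ) = x • ((1 : ℝ), (0 : ℝ)) + y • ((0 : ℝ), (1 : ℝ)) := by simp
  rw [hxy, map_add, map_smul, map_smul, smul_eq_mul, smul_eq_mul]

theorem fderiv_comp_prodMk_apply {X : Type*} [NormedAddCommGroup X] [NormedSpace ℝ X]
    {f : ℝ × ℝ → ℝ} {u v : X → ℝ} {q : X}
    (hf : DifferentiableAt ℝ f (u q, v q)) (hu : DifferentiableAt ℝ u q)
    (hv : DifferentiableAt ℝ v q) (h : X) :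
    fderiv ℝ (fun r => f (u r, v r)) q h
      = fderiv ℝ f (u q, v q) (1, 0) * fderiv ℝ u q h
        + fderiv ℝ f (u q, v q) (0, 1) * fderiv ℝ v q h := by
  have hchain : HasFDerivAt (fun r => f (u r, v r))
      ((fderiv ℝ f (u q, v q)).comp ((fderiv ℝ u q).prod (fderiv ℝ v q))) q :=
    hf.hasFDerivAt.comp q (hu.hasFDerivAt.prodMk hv.hasFDerivAt)
  rw [hchain.fderiv, ContinuousLinearMap.comp_apply, ContinuousLinearMap.prod_apply,
    ContinuousLinearMap.apply_prod_eq_mul_add_mul, mul_comm (fderiv ℝ u q h),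
    mul_comm (fderiv ℝ v q h)]

theorem material_derivatives_of_diagonal_system {K : Type*} [Field K]
    {a b c d T E Tt Tx Et Ex : K} (hΔ : a * d - b * c ≠ 0)
    (hz : a * Tt + b * Et + (T - E) * (a * Tx + b * Ex) = 0)
    (hw : c * Tt + d * Et + (T + E) * (c * Tx + d * Ex) = 0) :
    Tt + T * Tx = E / (a * d - b * c) * ((a * d + b * c) * Tx + 2 * b * d * Ex) ∧
      Et + T * Ex = -(E / (a * d - b * c)) * (2 * a * c * Tx + (b * c + a * d) * Ex) := by
  constructor
  · field_simp
    linear_combination d * hz - b * hw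
  · field_simp
    linear_combination (-c) * hz + a * hw

/-- If the Riemann invariants `z, w` (as `C¹` functions of `(T,E)` on an
open set `U` with nonvanishing Jacobian `Δ = z_T·w_E − z_E·w_T`) composed with `C¹` fields
`T, E` on an open space-time set `Ω` satisfy the diagonal system `z̃_t + (T−E)z̃_x = 0`,
`w̃_t + (T+E)w̃_x = 0`, then `(T,E)` satisfy
`T_t + T·T_x = (E/Δ)[(z_T w_E + z_E w_T)T_x + 2 z_E w_E E_x]` and
`E_t + T·E_x = −(E/Δ)[2 z_T w_T T_x + (z_E w_T + z_T w_E)E_x]`. -/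
theorem riemann_invariants_to_TE_system
    (U : Set (ℝ × ℝ)) (hU : IsOpen U)
    (z w : ℝ × ℝ → ℝ)
    (hz : ContDiffOn ℝ 1 z U) (hw : ContDiffOn ℝ 1 w U)
    (hΔ : ∀ r ∈ U, fderiv ℝ z r (1, 0) * fderiv ℝ w r (0, 1)
      - fderiv ℝ z r (0, 1) * fderiv ℝ w r (1, 0) ≠ 0)
    (Ω : Set (ℝ × ℝ)) (hΩ : IsOpen Ω)
    (T E : ℝ × ℝ → ℝ)
    (hT : ContDiffOn ℝ 1 T Ω) (hE : ContDiffOn ℝ 1 E Ω)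
    (hmem : ∀ q ∈ Ω, (T q, E q) ∈ U)
    (hzeq : ∀ q ∈ Ω, fderiv ℝ (fun r => z (T r, E r)) q (0, 1)
      + (T q - E q) * fderiv ℝ (fun r => z (T r, E r)) q (1, 0) = 0)
    (hweq : ∀ q ∈ Ω, fderiv ℝ (fun r => w (T r, E r)) q (0, 1)
      + (T q + E q) * fderiv ℝ (fun r => w (T r, E r)) q (1, 0) = 0) :
    ∀ q ∈ Ω,
      (fderiv ℝ T q (0, 1) + T q * fderiv ℝ T q (1, 0)
        = (E q / (fderiv ℝ z (T q, E q) (1, 0) * fderiv ℝ w (T q, E q) (0, 1)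
              - fderiv ℝ z (T q, E q) (0, 1) * fderiv ℝ w (T q, E q) (1, 0)))
          * ((fderiv ℝ z (T q, E q) (1, 0) * fderiv ℝ w (T q, E q) (0, 1)
                + fderiv ℝ z (T q, E q) (0, 1) * fderiv ℝ w (T q, E q) (1, 0))
              * fderiv ℝ T q (1, 0)
            + 2 * fderiv ℝ z (T q, E q) (0, 1) * fderiv ℝ w (T q, E q) (0, 1)
              * fderiv ℝ E q (1, 0))) ∧
      (fderiv ℝ E q (0, 1) + T q * fderiv ℝ E q (1, 0)
        = -(E q / (fderiv ℝ z (T q, E q) (1, 0) * fderiv ℝ w (T q, E q) (0, 1)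
              - fderiv ℝ z (T q, E q) (0, 1) * fderiv ℝ w (T q, E q) (1, 0)))
          * (2 * fderiv ℝ z (T q, E q) (1, 0) * fderiv ℝ w (T q, E q) (1, 0)
              * fderiv ℝ T q (1, 0)
            + (fderiv ℝ z (T q, E q) (0, 1) * fderiv ℝ w (T q, E q) (1, 0)
                + fderiv ℝ z (T q, E q) (1, 0) * fderiv ℝ w (T q, E q) (0, 1))
              * fderiv ℝ E q (1, 0))) := by
  intro q hq
  have hp := hmem q hq
  have hzd := (hz.contDiffAt (hU.mem_nhds hp)).differentiableAt one_ne_zero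
  have hwd := (hw.contDiffAt (hU.mem_nhds hp)).differentiableAt one_ne_zero
  have hTd := (hT.contDiffAt (hΩ.mem_nhds hq)).differentiableAt one_ne_zero
  have hEd := (hE.contDiffAt (hΩ.mem_nhds hq)).differentiableAt one_ne_zero
  have hzq := hzeq q hq
  have hwq := hweq q hq
  simp only [fderiv_comp_prodMk_apply hzd hTd hEd, fderiv_comp_prodMk_apply hwd hTd hEd] at hzq hwq
  exact material_derivatives_of_diagonal_system (hΔ _ hp) (by linear_combination hzq)
    (by linear_combination hwq)
end
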